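/- Let p₁/q₁ < p₂/q₂ < p₃/q₃ be three consecutive Farey fractions in the n-th level of the Farey subtree of fractions in [0, 1/2] generated from 0/1 and 1/2, and let k ≥ 0 be such that p₂/q₂ has minimal level n − k. Then p₁ + p₃ = (2k+1)·p₂ and q₁ + q₃ = (2k+1)·q₂; in particular p₂/q₂ = (p₁+p₃)/(q₁+q₃). -/

import Mathlib

def fareyInsert : List (ℕ × ℕ) → List (ℕ × ℕ)
  | x :: y :: rest => x :: (x.1 + y.1, x.2 + y.2) :: fareyInsert (y :: rest)
  | l => l

def fareyLevel2 : ℕ → List (ℕ × ℕ)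
  | 0 => [(0, 1), (1, 2)]
  | n + 1 => fareyInsert (fareyLevel2 n)

lemma fareyInsert_nil : fareyInsert [] = [] := rfl
lemma fareyInsert_single (x : ℕ × ℕ) : fareyInsert [x] = [x] := rfl

lemma fareyInsert_even (l : List (ℕ × ℕ)) : ∀ j, (fareyInsert l)[2*j]? = l[j]? := by
  induction l with
  | nil => intro j; simp [fareyInsert_nil]
  | cons x t ih =>
    cases t with
    | nil =>
      intro j
      rw [fareyInsert_single]
      cases j with
      | zero => rfl
      | succ j =>
        rw [List.getElem?_eq_none (by simp; omega), List.getElem?_eq_none (by simp)]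
    | cons y rest =>
      intro j
      cases j with
      | zero => rfl
      | succ j =>
        have e : 2*(j+1) = (2*j)+1+1 := by ring
        rw [fareyInsert, e, List.getElem?_cons_succ, List.getElem?_cons_succ,
          ih j, List.getElem?_cons_succ]

lemma fareyInsert_odd (l : List (ℕ × ℕ)) : ∀ j c, (fareyInsert l)[2*j+1]? = some c →
    ∃ a b, l[j]? = some a ∧ l[j+1]? = some b ∧ c = (a.1+b.1, a.2+b.2) := by
  induction l with
  | nil => intro j c h; rw [fareyInsert_nil] at h; simp at h
  | cons x t ih =>
    cases t with
    | nil =>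
      intro j c h
      rw [fareyInsert_single, List.getElem?_eq_none (by simp)] at h
      exact absurd h (by simp)
    | cons y rest =>
      intro j c h
      cases j with
      | zero =>
        rw [fareyInsert] at h
        simp at h
        exact ⟨x, y, rfl, by simp, h.symm⟩
      | succ j =>
        have e : 2*(j+1)+1 = (2*j+1)+1+1 := by ring
        rw [fareyInsert, e, List.getElem?_cons_succ, List.getElem?_cons_succ] at h
        obtain ⟨a, b, ha, hb, hc⟩ := ih j c h
        exact ⟨a, b, by simpa using ha, by simpa using hb, hc⟩

lemma mem_fareyInsert : ∀ l : List (ℕ × ℕ), ∀ x ∈ l, x ∈ fareyInsert l := by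
  intro l
  induction l with
  | nil => simp
  | cons a t ih =>
    cases t with
    | nil => intro x hx; rwa [fareyInsert_single]
    | cons y rest =>
      intro x hx
      rw [fareyInsert]
      rcases List.mem_cons.mp hx with h | h
      · exact h ▸ List.mem_cons_self
      · right; right; exact ih x h

lemma fareyLevel2_mono {m m' : ℕ} (h : m ≤ m') : ∀ x ∈ fareyLevel2 m, x ∈ fareyLevel2 m' := by
  induction m' with
  | zero => intro x hx; rwa [Nat.le_zero.mp h] at hx
  | succ m' ih =>
    rcases Nat.lt_or_ge m (m'+1) with h' | h'
    · intro x hx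
      rw [fareyLevel2]
      exact mem_fareyInsert _ x (ih (by omega) x hx)
    · intro x hx; rwa [show m = m'+1 by omega] at hx

/-- The invariant: positive denominators and unimodular consecutive pairs. -/
def FInv (L : List (ℕ × ℕ)) : Prop :=
  (∀ x ∈ L, 0 < x.2) ∧
  ∀ j a b, L[j]? = some a → L[j+1]? = some b → a.1 * b.2 + 1 = b.1 * a.2

lemma finv_insert {L : List (ℕ × ℕ)} (h : FInv L) : FInv (fareyInsert L) := by
  obtain ⟨hpos, huni⟩ := h
  constructor
  · intro x hx
    obtain ⟨m, hm⟩ := List.mem_iff_getElem?.mp hx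
    rcases Nat.even_or_odd m with ⟨j, hj⟩ | ⟨j, hj⟩
    · rw [hj, show j + j = 2*j by ring, fareyInsert_even] at hm
      exact hpos x (List.mem_of_getElem? hm)
    · rw [hj] at hm
      obtain ⟨a, b, ha, hb, hc⟩ := fareyInsert_odd L j x hm
      have h1 := hpos a (List.mem_of_getElem? ha)
      have h2 := hpos b (List.mem_of_getElem? hb)
      rw [hc]; simp; omega
  · intro m c d hc hd
    rcases Nat.even_or_odd m with ⟨j, hj⟩ | ⟨j, hj⟩
    · subst hj
      rw [show j + j = 2*j by ring] at hc hd
      rw [fareyInsert_even] at hc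
      obtain ⟨a, b, ha, hb, hab⟩ := fareyInsert_odd L j d hd
      rw [ha] at hc
      have hac : a = c := by injection hc
      have h1 := huni j a b ha hb
      subst hab
      rw [← hac]
      show a.1 * (a.2 + b.2) + 1 = (a.1 + b.1) * a.2
      nlinarith [h1]
    · subst hj
      obtain ⟨a, b, ha, hb, hab⟩ := fareyInsert_odd L j c hc
      rw [show 2*j+1+1 = 2*(j+1) by ring, fareyInsert_even, hb] at hd
      have hbd : b = d := by injection hd
      have h1 := huni j a b ha hb
      subst hab
      rw [← hbd]
      show (a.1 + b.1) * b.2 + 1 = b.1 * (a.2 + b.2)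
      nlinarith [h1]

lemma finv_level (n : ℕ) : FInv (fareyLevel2 n) := by
  induction n with
  | zero =>
    constructor
    · intro x hx
      simp only [fareyLevel2, List.mem_cons, List.mem_singleton] at hx
      rcases hx with rfl | rfl | h
      · norm_num
      · norm_num
      · simp at h
    · intro j a b ha hb
      match j with
      | 0 =>
        simp [fareyLevel2] at ha hb
        rw [← ha, ← hb]; rfl
      | j+1 =>
        rw [List.getElem?_eq_none (by simp [fareyLevel2])] at hb
        exact absurd hb (by simp)
  | succ n ih => exact finv_insert ih

/-- Strict ordering between entries at different indices. -/
lemma lt_of_index {L : List (ℕ × ℕ)} (h : FInv L) :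
    ∀ (s r : ℕ) (a b : ℕ × ℕ), r < s → L[r]? = some a → L[s]? = some b →
      a.1 * b.2 < b.1 * a.2 := by
  obtain ⟨hpos, huni⟩ := h
  intro s
  induction s with
  | zero => intro r a b hr _ _; omega
  | succ s ih =>
    intro r a b hr ha hb
    rcases Nat.lt_or_ge r s with h' | h'
    · have hs : s < L.length := by
        have := (List.getElem?_eq_some_iff.mp hb).1; omega
      have hcs : L[s]? = some L[s] := List.getElem?_eq_some_iff.mpr ⟨hs, rfl⟩
      have h1 := ih r a L[s] h' ha hcs
      have h2 := huni s L[s] b hcs hb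
      have hc2 : 0 < (L[s]).2 := hpos _ (List.mem_of_getElem? hcs)
      have ha2 : 0 < a.2 := hpos _ (List.mem_of_getElem? ha)
      have hb2 : 0 < b.2 := hpos _ (List.mem_of_getElem? hb)
      nlinarith [h1, h2]
    · have : r = s := by omega
      subst this
      have := huni r a b ha hb
      omega

/-- A member of `L` cannot be the mediant of two consecutive entries of `L`. -/
lemma not_mediant_mem {L : List (ℕ × ℕ)} (h : FInv L) {p a b : ℕ × ℕ} {j : ℕ}
    (hp : p ∈ L) (ha : L[j]? = some a) (hb : L[j+1]? = some b)
    (hm : p = (a.1 + b.1, a.2 + b.2)) : False := by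
  obtain ⟨hpos, huni⟩ := h
  obtain ⟨r, hr⟩ := List.mem_iff_getElem?.mp hp
  have huab := huni j a b ha hb
  have ha2 : 0 < a.2 := hpos _ (List.mem_of_getElem? ha)
  have hb2 : 0 < b.2 := hpos _ (List.mem_of_getElem? hb)
  rcases Nat.lt_trichotomy r j with h' | h' | h'
  · have hlt := lt_of_index ⟨hpos, huni⟩ j r p a h' hr ha
    rw [hm] at hlt
    simp only [Prod.fst, Prod.snd] at hlt
    nlinarith [hlt, huab]
  · subst h'
    rw [hr] at ha
    have : p = a := by injection ha
    rw [hm] at this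
    have h2 : a.2 + b.2 = a.2 := congrArg Prod.snd this
    omega
  · rcases Nat.lt_or_ge (j+1) r with h'' | h''
    · have hlt := lt_of_index ⟨hpos, huni⟩ r (j+1) b p h'' hb hr
      rw [hm] at hlt
      simp only [Prod.fst, Prod.snd] at hlt
      nlinarith [hlt, huab]
    · have : r = j + 1 := by omega
      subst this
      rw [hr] at hb
      have : p = b := by injection hb
      rw [hm] at this
      have h2 : a.2 + b.2 = b.2 := congrArg Prod.snd this
      omega

lemma farey_aux : ∀ k n, k ≤ n → ∀ p2 q2,
    (p2, q2) ∈ fareyLevel2 (n - k) →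
    (∀ m < n - k, (p2, q2) ∉ fareyLevel2 m) →
    ∀ i p1 q1 p3 q3,
    (fareyLevel2 n)[i]? = some (p1, q1) →
    (fareyLevel2 n)[i + 1]? = some (p2, q2) →
    (fareyLevel2 n)[i + 2]? = some (p3, q3) →
    p1 + p3 = (2 * k + 1) * p2 ∧ q1 + q3 = (2 * k + 1) * q2 := by
  intro k
  induction k with
  | zero =>
    intro n _ p2 q2 hmem hmin i p1 q1 p3 q3 h1 h2 h3
    match n with
    | 0 =>
      exfalso
      rw [List.getElem?_eq_none (by simp [fareyLevel2])] at h3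
      exact absurd h3 (by simp)
    | n+1 =>
      have hnot : (p2, q2) ∉ fareyLevel2 n := hmin n (by omega)
      rw [fareyLevel2] at h1 h2 h3
      rcases Nat.even_or_odd (i+1) with ⟨j, hj⟩ | ⟨j, hj⟩
      · exfalso
        rw [hj, show j + j = 2*j by ring, fareyInsert_even] at h2
        exact hnot (List.mem_of_getElem? h2)
      · rw [hj] at h2
        obtain ⟨a, b, ha, hb, hab⟩ := fareyInsert_odd _ j _ h2
        rw [show i = 2*j by omega, fareyInsert_even, ha] at h1
        rw [show i+2 = 2*(j+1) by omega, fareyInsert_even, hb] at h3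
        obtain rfl : a = (p1, q1) := by injection h1
        obtain rfl : b = (p3, q3) := by injection h3
        simp at hab
        obtain ⟨e1, e2⟩ := hab
        constructor <;> omega
  | succ k ih =>
    intro n hk p2 q2 hmem hmin i p1 q1 p3 q3 h1 h2 h3
    match n with
    | 0 => omega
    | n+1 =>
      have hk' : k ≤ n := by omega
      have hsub : n + 1 - (k + 1) = n - k := by omega
      rw [hsub] at hmem hmin
      have hmemn : (p2, q2) ∈ fareyLevel2 n := fareyLevel2_mono (by omega) _ hmem
      rw [fareyLevel2] at h1 h2 h3
      rcases Nat.even_or_odd (i+1) with ⟨j, hj⟩ | ⟨j, hj⟩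
      · -- p2 at even index 2j; j ≥ 1
        have hj' : i + 1 = 2 * j := by omega
        have hjpos : 1 ≤ j := by omega
        rw [hj', fareyInsert_even] at h2
        rw [show i = 2*(j-1)+1 by omega] at h1
        obtain ⟨a, b, ha, hb, hab1⟩ := fareyInsert_odd _ (j-1) _ h1
        rw [show j - 1 + 1 = j by omega, h2] at hb
        obtain rfl : (p2, q2) = b := by injection hb
        rw [show i + 2 = 2*j+1 by omega] at h3
        obtain ⟨b', c, hb', hc, hab3⟩ := fareyInsert_odd _ j _ h3
        rw [h2] at hb'
        obtain rfl : (p2, q2) = b' := by injection hb'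
        have key := ih n hk' p2 q2 hmem hmin (j-1) a.1 a.2 c.1 c.2
          (by simpa using ha)
          (by rw [show j - 1 + 1 = j by omega]; exact h2)
          (by rw [show j - 1 + 2 = j + 1 by omega]; simpa using hc)
        obtain ⟨e1, e2⟩ := key
        simp at hab1 hab3
        obtain ⟨f1, f2⟩ := hab1
        obtain ⟨f3, f4⟩ := hab3
        constructor
        · rw [f1, f3, show (2*(k+1)+1)*p2 = (2*k+1)*p2 + 2*p2 by ring, ← e1]
          omega
        · rw [f2, f4, show (2*(k+1)+1)*q2 = (2*k+1)*q2 + 2*q2 by ring, ← e2]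
          omega
      · exfalso
        rw [hj] at h2
        obtain ⟨a, b, ha, hb, hab⟩ := fareyInsert_odd _ j _ h2
        exact not_mediant_mem (finv_level n) hmemn ha hb hab

/-- Let `p₁/q₁ < p₂/q₂ < p₃/q₃` be three consecutive fractions in the `n`-th
level of `F_{0/1,1/2}`, and suppose `p₂/q₂` has minimal level `n − k`
(with `k ≤ n`). Then `p₁ + p₃ = (2k+1) p₂` and `q₁ + q₃ = (2k+1) q₂`;
in particular `p₂/q₂ = (p₁+p₃)/(q₁+q₃)`. -/
theorem farey_consecutive_median (n k : ℕ) (hk : k ≤ n)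
    (p1 q1 p2 q2 p3 q3 : ℕ)
    (hmem : (p2, q2) ∈ fareyLevel2 (n - k))
    (hminlevel : ∀ m < n - k, (p2, q2) ∉ fareyLevel2 m)
    (i : ℕ)
    (h1 : (fareyLevel2 n)[i]? = some (p1, q1))
    (h2 : (fareyLevel2 n)[i + 1]? = some (p2, q2))
    (h3 : (fareyLevel2 n)[i + 2]? = some (p3, q3)) :
    p1 + p3 = (2 * k + 1) * p2 ∧ q1 + q3 = (2 * k + 1) * q2 :=
  farey_aux k n hk p2 q2 hmem hminlevel i p1 q1 p3 q3 h1 h2 h3
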